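/- arXiv:2008.08541 — 2 statements merged into one kernel-verified Lean document; each statement's English description precedes it below -/
import Mathlib

section
/- Let G be a finite simple graph and v a fixed vertex. Then every pattern s solving the all-ones configuration satisfies s(v) = 1 if and only if every pattern p solving c_v satisfies p(v) = 1. (Equivalently: v is always-activated for the all-ones configuration iff v is always-activated for c_v.) -/
open scoped Classical

/-- Closed adjacency matrix of a simple graph over GF(2): entry (i,j) is 1 iff i = j or i ~ j. -/
noncomputable def closedAdj {V : Type*} [Fintype V] (G : SimpleGraph V) :
    Matrix V V (ZMod 2) :=
  Matrix.of fun i j => if i = j ∨ G.Adj i j then 1 else 0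

/-- Nullity ν(G): dimension over GF(2) of the kernel of the closed adjacency matrix. -/
noncomputable def nu {V : Type*} [Fintype V] (G : SimpleGraph V) : ℕ :=
  Module.finrank (ZMod 2) (LinearMap.ker (closedAdj G).mulVecLin)

/-
Over GF(2) the form x ↦ x ⬝ N x of a symmetric matrix N with unit diagonal is the linear form
x ↦ ∑ xᵢ, because the off-diagonal terms cancel in pairs. Hence 1 is orthogonal to ker N, so
N s = 1 is always solvable (Sutner); since v is fixed, c_v is orthogonal to ker N as well, so
N p = c_v is solvable too. For any two such solutions
  s(v) = s ⬝ N p = N s ⬝ p = ∑ pᵢ = p ⬝ N p = p(v),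
so all solutions of both systems take one common value at v.
-/

open Matrix Finset

namespace Matrix

variable {m n K : Type*} [Fintype m] [Fintype n]

theorem exists_mulVec_eq_of_forall_vecMul_eq_zero [Field K] (M : Matrix m n K) {w : m → K}
    (hw : ∀ k, k ᵥ* M = 0 → k ⬝ᵥ w = 0) : ∃ x, M *ᵥ x = w := by
  classical
  by_contra! h
  obtain ⟨f, hfw, hf⟩ := Submodule.exists_dual_map_eq_bot_of_notMem
    (p := LinearMap.range M.mulVecLin) (fun ⟨x, hx⟩ => h x hx) inferInstance
  obtain ⟨k, rfl⟩ := (dotProductEquiv K m).surjective f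
  have hk : k ᵥ* M = 0 := dotProduct_eq_zero _ fun x => by
    rw [← dotProduct_mulVec]
    exact (Submodule.eq_bot_iff _).mp hf _
      (Submodule.mem_map_of_mem (LinearMap.mem_range_self _ x))
  exact hfw (hw k hk)

theorem IsSymm.dotProduct_mulVec_self_of_charTwo [CommRing K] [CharP K 2] {M : Matrix n n K}
    (hM : M.IsSymm) (x : n → K) : x ⬝ᵥ M *ᵥ x = ∑ i, M i i * (x i * x i) := by
  classical
  set f : n × n → K := fun p => x p.1 * M p.1 p.2 * x p.2
  have hoff : ∑ p ∈ univ.offDiag, f p = 0 := by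
    refine sum_involution (fun p _ => p.swap) (fun p _ => ?_) (fun p hp _ => ?_)
      (fun p hp => by simpa [and_comm, eq_comm] using hp) (fun _ _ => rfl)
    · have hswap : f p.swap = f p := by
        simp only [f, Prod.fst_swap, Prod.snd_swap, hM.apply p.2 p.1]
        ring
      rw [hswap, CharTwo.add_self_eq_zero]
    · exact fun h => (mem_offDiag.mp hp).2.2 (congrArg Prod.snd h)
  calc x ⬝ᵥ M *ᵥ x = ∑ p ∈ univ ×ˢ univ, f p := by
        simp only [f, sum_product, dotProduct, mulVec, mul_sum, mul_assoc]
    _ = ∑ i, M i i * (x i * x i) := by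
        rw [← diag_union_offDiag, sum_union (disjoint_diag_offDiag _), hoff, add_zero,
          Finset.diag, sum_map]
        simp [f, mul_comm, mul_left_comm]

end Matrix

section closedAdj

variable {V : Type*} [Fintype V] (G : SimpleGraph V)

theorem closedAdj_isSymm : (closedAdj G).IsSymm := by
  ext i j
  simp [closedAdj, eq_comm, G.adj_comm]

theorem closedAdj_apply_self (i : V) : closedAdj G i i = 1 := by
  simp [closedAdj]

theorem vecMul_closedAdj (x : V → ZMod 2) : x ᵥ* closedAdj G = closedAdj G *ᵥ x := by
  rw [← vecMul_transpose, closedAdj_isSymm G]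

theorem dotProduct_mulVec_closedAdj_self (x : V → ZMod 2) :
    x ⬝ᵥ closedAdj G *ᵥ x = ∑ i, x i := by
  rw [(closedAdj_isSymm G).dotProduct_mulVec_self_of_charTwo]
  simp only [closedAdj_apply_self, one_mul, ← sq, ZMod.pow_card]

theorem exists_mulVec_closedAdj_eq_one : ∃ s, closedAdj G *ᵥ s = 1 :=
  (closedAdj G).exists_mulVec_eq_of_forall_vecMul_eq_zero fun k hk => by
    rw [dotProduct_one, ← dotProduct_mulVec_closedAdj_self, ← vecMul_closedAdj, hk,
      dotProduct_zero]

theorem exists_mulVec_closedAdj_eq_single {v : V}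
    (hv : ∀ l : V → ZMod 2, closedAdj G *ᵥ l = 0 → l v = 0) :
    ∃ p, closedAdj G *ᵥ p = Pi.single v 1 :=
  (closedAdj G).exists_mulVec_eq_of_forall_vecMul_eq_zero fun k hk => by
    rw [dotProduct_single, mul_one]
    exact hv k (vecMul_closedAdj G k ▸ hk)

theorem apply_eq_apply_of_mulVec_closedAdj_eq_one_of_eq_single {v : V} {s p : V → ZMod 2}
    (hs : closedAdj G *ᵥ s = 1) (hp : closedAdj G *ᵥ p = Pi.single v 1) : s v = p v :=
  calc s v = s ⬝ᵥ closedAdj G *ᵥ p := by rw [hp, dotProduct_single, mul_one]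
    _ = 1 ⬝ᵥ p := by rw [dotProduct_mulVec, vecMul_closedAdj, hs]
    _ = p ⬝ᵥ closedAdj G *ᵥ p := by rw [one_dotProduct, dotProduct_mulVec_closedAdj_self]
    _ = p v := by rw [hp, dotProduct_single, mul_one]

end closedAdj

theorem always_activated_iff {V : Type*} [Fintype V] (G : SimpleGraph V) (v : V)
    (hv : ∀ l : V → ZMod 2, (closedAdj G).mulVec l = 0 → l v = 0) :
    (∀ s : V → ZMod 2, (closedAdj G).mulVec s = 1 → s v = 1) ↔
      (∀ p : V → ZMod 2, (closedAdj G).mulVec p = Pi.single v 1 → p v = 1) := by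
  obtain ⟨s₀, hs₀⟩ := exists_mulVec_closedAdj_eq_one G
  obtain ⟨p₀, hp₀⟩ := exists_mulVec_closedAdj_eq_single G hv
  constructor
  · intro h p hp
    rw [← apply_eq_apply_of_mulVec_closedAdj_eq_one_of_eq_single G hs₀ hp]
    exact h s₀ hs₀
  · intro h s hs
    rw [apply_eq_apply_of_mulVec_closedAdj_eq_one_of_eq_single G hs hp₀]
    exact h p₀ hp₀
end

section
/- Let G be a finite simple graph and u a half-activated vertex (some null pattern of G activates u). Then ν(G−u) = ν(G) − 1. -/
open scoped Classical

/-!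
Let `N` be the closed adjacency matrix of `G`, `M` that of `G - u` (the principal submatrix of `N`
on `{u}ᶜ`), and `ℓ` a null vector of `N` with `ℓ u = 1`. Restriction to `{u}ᶜ` maps the null
vectors of `N` vanishing at `u` isomorphically onto `ker M`: if `M y = 0` and `x` extends `y` by
zero, then `N x` is supported on `{u}`, and `(N x) u = ℓ ⬝ N x = N ℓ ⬝ x = 0` by symmetry of `N`.
Since `ℓ` shows that evaluation at `u` is a nonzero functional on `ker N`, those null vectors
form a hyperplane of `ker N`.
-/

open LinearMap Module

namespace Matrix

variable {K n : Type*}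

abbrev deleteRowCol (A : Matrix n n K) (u : n) : Matrix ({u}ᶜ : Set n) ({u}ᶜ : Set n) K :=
  A.submatrix (↑) (↑)

variable [Fintype n] [DecidableEq n]

theorem deleteRowCol_mulVec_of_apply_eq_zero [NonUnitalNonAssocSemiring K] (A : Matrix n n K)
    {u : n} {x : n → K} (hx : x u = 0) :
    A.deleteRowCol u *ᵥ (fun i => x i) = fun i : ({u}ᶜ : Set n) => (A *ᵥ x) i := by
  funext i
  simp only [mulVec, dotProduct, submatrix_apply, Fintype.sum_eq_add_sum_subtype_ne _ u, hx,
    mul_zero, zero_add]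
  rfl

theorem IsSymm.mulVec_eq_zero_of_deleteRowCol_mulVec_eq_zero [CommSemiring K] [NoZeroDivisors K]
    {A : Matrix n n K} (hA : A.IsSymm) {l : n → K} (hl : A *ᵥ l = 0) {u : n} (hlu : l u ≠ 0)
    {x : n → K} (hx : x u = 0) (hres : A.deleteRowCol u *ᵥ (fun i => x i) = 0) :
    A *ᵥ x = 0 := by
  rw [deleteRowCol_mulVec_of_apply_eq_zero A hx] at hres
  have hoff : ∀ i ≠ u, (A *ᵥ x) i = 0 := fun i hi => congrFun hres ⟨i, hi⟩
  have hu : l u * (A *ᵥ x) u = 0 :=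
    calc l u * (A *ᵥ x) u = l ⬝ᵥ (A *ᵥ x) := by
          rw [dotProduct, Finset.sum_eq_single u (fun i _ hi => by rw [hoff i hi, mul_zero])
            (by simp)]
      _ = (A *ᵥ l) ⬝ᵥ x := by rw [dotProduct_mulVec, ← vecMul_transpose, hA.eq]
      _ = 0 := by rw [hl, zero_dotProduct]
  funext i
  by_cases hi : i = u
  · subst hi
    exact (mul_eq_zero.mp hu).resolve_left hlu
  · exact hoff i hi

theorem IsSymm.finrank_ker_deleteRowCol_add_one [Field K] {A : Matrix n n K} (hA : A.IsSymm)
    {l : n → K} (hl : A *ᵥ l = 0) {u : n} (hlu : l u ≠ 0) :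
    finrank K (ker (A.deleteRowCol u).mulVecLin) + 1 = finrank K (ker A.mulVecLin) := by
  let φ : Dual K (ker A.mulVecLin) := (proj u).comp (ker A.mulVecLin).subtype
  have hφ : φ ≠ 0 := fun h => hlu congr($h ⟨l, hl⟩)
  rw [← Dual.finrank_ker_add_one_of_ne_zero hφ]
  congr 1
  let restrict : ker φ →ₗ[K] ker (A.deleteRowCol u).mulVecLin :=
    codRestrict _ (funLeft K K Subtype.val ∘ₗ (ker A.mulVecLin).subtype ∘ₗ (ker φ).subtype)
      fun ⟨⟨x, hxA⟩, hxu⟩ => by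
        rw [mem_ker, mulVecLin_apply] at hxA
        change A.deleteRowCol u *ᵥ (fun i => x i) = 0
        rw [deleteRowCol_mulVec_of_apply_eq_zero A hxu, hxA]
        rfl
  refine (LinearEquiv.ofBijective restrict ⟨?_, ?_⟩).finrank_eq.symm
  · rintro ⟨⟨x, _⟩, hxu⟩ ⟨⟨y, _⟩, hyu⟩ h
    ext i
    by_cases hi : i = u
    · exact hi ▸ hxu.trans hyu.symm
    · exact congrFun (congrArg Subtype.val h) ⟨i, hi⟩
  · rintro ⟨y, hy⟩
    let x : n → K := fun v => if h : v = u then 0 else y ⟨v, h⟩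
    have hxu : x u = 0 := dif_pos rfl
    have hxy : (fun i : ({u}ᶜ : Set n) => x i) = y := funext fun i => dif_neg i.2
    have hxA : A *ᵥ x = 0 :=
      hA.mulVec_eq_zero_of_deleteRowCol_mulVec_eq_zero hl hlu hxu (hxy ▸ hy)
    exact ⟨⟨⟨x, hxA⟩, hxu⟩, Subtype.ext hxy⟩

end Matrix

theorem closedAdj_isSymm_s12 {V : Type*} [Fintype V] (G : SimpleGraph V) : (closedAdj G).IsSymm := by
  ext i j
  simp only [closedAdj, Matrix.transpose_apply, Matrix.of_apply, eq_comm, G.adj_comm]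

theorem closedAdj_induce {V : Type*} [Fintype V] (G : SimpleGraph V) (s : Set V) [Fintype s] :
    closedAdj (G.induce s) = (closedAdj G).submatrix (↑) (↑) := by
  ext i j
  simp only [closedAdj, Matrix.submatrix_apply, Matrix.of_apply, SimpleGraph.comap_adj,
    Function.Embedding.coe_subtype, Subtype.ext_iff]

theorem nu_delete_half_activated {V : Type*} [Fintype V] (G : SimpleGraph V) (u : V)
    (hu : ∃ l : V → ZMod 2, (closedAdj G).mulVec l = 0 ∧ l u = 1) :
    nu (G.induce ({u}ᶜ : Set V)) = nu G - 1 := by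
  obtain ⟨l, hl, hlu⟩ := hu
  have hdim := (closedAdj_isSymm_s12 G).finrank_ker_deleteRowCol_add_one hl (hlu ▸ one_ne_zero)
  rw [nu, nu, closedAdj_induce, ← hdim, Nat.add_sub_cancel]
end
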